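/- Let μ₁, μ₂ be real numbers with μ₁ > μ₂ ≥ 0, and let σ₁, σ₂ > 0. Define f(t) = (t·μ₁ − μ₂)/√(t²σ₁² + σ₂²). Then f is strictly increasing on (0, ∞): for all real a, a' with 0 < a < a', one has f(a) < f(a'), and consequently Φ(f(a)) < Φ(f(a')), where Φ is the standard normal cumulative distribution function. -/
import Mathlib


/-- The standard normal cumulative distribution function
`Φ(x) = (2π)^{-1/2} ∫_{-∞}^{x} e^{-t²/2} dt`. -/
noncomputable def Phi (x : ℝ) : ℝ :=
  ∫ t in Set.Iic x, Real.exp (-t ^ 2 / 2) / Real.sqrt (2 * Real.pi)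

lemma gauss_integrable : MeasureTheory.Integrable
    (fun t : ℝ => Real.exp (-t ^ 2 / 2) / Real.sqrt (2 * Real.pi)) := by
  have h := integrable_exp_neg_mul_sq (b := (1:ℝ)/2) (by norm_num)
  have : (fun t : ℝ => Real.exp (-t ^ 2 / 2) / Real.sqrt (2 * Real.pi)) =
      fun t : ℝ => Real.exp (-(1/2) * t ^ 2) * (Real.sqrt (2 * Real.pi))⁻¹ := by
    funext t; rw [div_eq_mul_inv]; ring_nf
  rw [this]
  exact h.mul_const _

lemma Phi_strictMono : StrictMono Phi := by
  intro x y hxy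
  have hpos : ∀ t : ℝ, 0 < Real.exp (-t ^ 2 / 2) / Real.sqrt (2 * Real.pi) := by
    intro t
    exact div_pos (Real.exp_pos _)
      (Real.sqrt_pos.mpr (by positivity))
  have hunion : Set.Iic x ∪ Set.Ioc x y = Set.Iic y := Set.Iic_union_Ioc_eq_Iic hxy.le
  have hdisj : Disjoint (Set.Iic x) (Set.Ioc x y) := by
    simp [Set.disjoint_left]
    intro t ht; exact fun h => absurd h (not_lt.mpr ht)
  have hint := gauss_integrable
  have hsplit : Phi y = Phi x + ∫ t in Set.Ioc x y,
      Real.exp (-t ^ 2 / 2) / Real.sqrt (2 * Real.pi) := by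
    unfold Phi
    rw [← hunion, MeasureTheory.setIntegral_union hdisj measurableSet_Ioc
      hint.integrableOn hint.integrableOn]
  have hIoc : 0 < ∫ t in Set.Ioc x y,
      Real.exp (-t ^ 2 / 2) / Real.sqrt (2 * Real.pi) := by
    rw [← intervalIntegral.integral_of_le hxy.le]
    apply intervalIntegral.intervalIntegral_pos_of_pos_on
    · exact hint.intervalIntegrable
    · intro t _; exact hpos t
    · exact hxy
  linarith

/-- For `μ₁ > μ₂ ≥ 0` and `σ₁, σ₂ > 0`, the function
`f(t) = (tμ₁ - μ₂)/√(t²σ₁² + σ₂²)` is strictly increasing on `(0, ∞)`: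
for `0 < a < a'` we have `f(a) < f(a')`, and consequently
`Φ(f(a)) < Φ(f(a'))`. -/
theorem standardized_gap_strictMono (μ₁ μ₂ σ₁ σ₂ : ℝ)
    (hμ : μ₁ > μ₂) (hμ₂ : μ₂ ≥ 0) (hσ₁ : 0 < σ₁) (hσ₂ : 0 < σ₂)
    (a a' : ℝ) (ha : 0 < a) (haa' : a < a') :
    (a * μ₁ - μ₂) / Real.sqrt (a ^ 2 * σ₁ ^ 2 + σ₂ ^ 2) <
        (a' * μ₁ - μ₂) / Real.sqrt (a' ^ 2 * σ₁ ^ 2 + σ₂ ^ 2) ∧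
      Phi ((a * μ₁ - μ₂) / Real.sqrt (a ^ 2 * σ₁ ^ 2 + σ₂ ^ 2)) <
        Phi ((a' * μ₁ - μ₂) / Real.sqrt (a' ^ 2 * σ₁ ^ 2 + σ₂ ^ 2)) := by
  have hμ₁ : 0 < μ₁ := lt_of_le_of_lt hμ₂ hμ
  have hA2 : (0:ℝ) < a ^ 2 * σ₁ ^ 2 + σ₂ ^ 2 := by positivity
  have hB2 : (0:ℝ) < a' ^ 2 * σ₁ ^ 2 + σ₂ ^ 2 := by positivity
  set A := Real.sqrt (a ^ 2 * σ₁ ^ 2 + σ₂ ^ 2) with hAdef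
  set B := Real.sqrt (a' ^ 2 * σ₁ ^ 2 + σ₂ ^ 2) with hBdef
  have hA : 0 < A := Real.sqrt_pos.mpr hA2
  have hB : 0 < B := Real.sqrt_pos.mpr hB2
  have hAsq : A ^ 2 = a ^ 2 * σ₁ ^ 2 + σ₂ ^ 2 := Real.sq_sqrt hA2.le
  have hBsq : B ^ 2 = a' ^ 2 * σ₁ ^ 2 + σ₂ ^ 2 := Real.sq_sqrt hB2.le
  have hAB : A < B := by
    rw [hAdef, hBdef]
    apply Real.sqrt_lt_sqrt hA2.le
    have h : a ^ 2 < a' ^ 2 := by nlinarith [mul_pos (sub_pos.mpr haa') (by linarith : (0:ℝ) < a' + a)]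
    nlinarith [mul_lt_mul_of_pos_right h (pow_pos hσ₁ 2)]
  have key : (a * μ₁ - μ₂) / A < (a' * μ₁ - μ₂) / B := by
    rw [div_lt_div_iff₀ hA hB]
    rcases le_or_gt (a * μ₁ - μ₂) 0 with h1 | h1
    · rcases le_or_gt (a' * μ₁ - μ₂) 0 with h2 | h2
      · -- both ≤ 0
        have haa : a * μ₁ - μ₂ < a' * μ₁ - μ₂ := by nlinarith
        nlinarith
      · nlinarith
    · have h2 : 0 < a' * μ₁ - μ₂ := by nlinarith
      have hsq : ((a * μ₁ - μ₂) * B) ^ 2 < ((a' * μ₁ - μ₂) * A) ^ 2 := by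
        have e1 : ((a * μ₁ - μ₂) * B) ^ 2 =
            (a * μ₁ - μ₂) ^ 2 * (a' ^ 2 * σ₁ ^ 2 + σ₂ ^ 2) := by
          rw [mul_pow, hBsq]
        have e2 : ((a' * μ₁ - μ₂) * A) ^ 2 =
            (a' * μ₁ - μ₂) ^ 2 * (a ^ 2 * σ₁ ^ 2 + σ₂ ^ 2) := by
          rw [mul_pow, hAsq]
        rw [e1, e2]
        have h3 : 0 < (a' - a) * μ₁ * ((a * μ₁ - μ₂) + (a' * μ₁ - μ₂)) :=
          mul_pos (mul_pos (sub_pos.mpr haa') hμ₁) (by linarith)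
        have h4 : 0 ≤ μ₂ * (a' - a) * (a * (a' * μ₁ - μ₂) + a' * (a * μ₁ - μ₂)) := by
          apply mul_nonneg (mul_nonneg hμ₂ (by linarith))
          have := mul_pos ha h2
          have := mul_pos (ha.trans haa') h1
          linarith
        nlinarith [mul_pos (pow_pos hσ₂ 2) h3, mul_nonneg (sq_nonneg σ₁) h4]
      exact lt_of_pow_lt_pow_left₀ 2 (by positivity) hsq
  exact ⟨key, Phi_strictMono key⟩
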